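/- With the convention P_{−1} = 0, for every integer w ≥ 0 and every real x one has x·P_w(x) = A_w·P_{w−1}(x) + B_w·P_w(x) + C_w·P_{w+1}(x), where A_w = [[(n+w)(p+w−1)(n−p+w+1)/((p+w)(n−p+w)(2w+n+1)), 0],[0, (n+w)(p+w+1)(n−p+w−1)/((p+w)(n−p+w)(2w+n+1))]], B_w = [[0, −p/((p+w)(p+w+1))],[−(n−p)/((n−p+w)(n−p+w+1)), 0]], and C_w = ((w+1)/(2w+n+1))·Id. -/

import Mathlib

open scoped BigOperators Matrix

noncomputable section

/-- Gegenbauer polynomials `C_k^lam` with natural number index, defined by the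
three-term recurrence. -/
def Geg (lam : ℝ) : ℕ → ℝ → ℝ
  | 0 => fun _ => 1
  | 1 => fun x => 2 * lam * x
  | (k + 2) => fun x =>
      (2 * ((k : ℝ) + 2 + lam - 1) * x * Geg lam (k + 1) x
        - ((k : ℝ) + 2 + 2 * lam - 2) * Geg lam k x) / ((k : ℝ) + 2)

/-- Gegenbauer polynomials with integer index, equal to `0` for negative index. -/
def GegZ (lam : ℝ) (k : ℤ) (x : ℝ) : ℝ :=
  if k < 0 then 0 else Geg lam k.toNat x

/-- The 2×2 matrix valued polynomials `P_w`. -/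
def Pw (p n : ℝ) (w : ℕ) (x : ℝ) : Matrix (Fin 2) (Fin 2) ℂ :=
  !![(((1 / (n + 1)) * GegZ ((n + 1) / 2) (w : ℤ) x
        + (1 / (p + w)) * GegZ ((n + 3) / 2) ((w : ℤ) - 2) x : ℝ) : ℂ),
     (((1 / (p + w)) * GegZ ((n + 3) / 2) ((w : ℤ) - 1) x : ℝ) : ℂ);
     (((1 / (n - p + w)) * GegZ ((n + 3) / 2) ((w : ℤ) - 1) x : ℝ) : ℂ),
     (((1 / (n + 1)) * GegZ ((n + 1) / 2) (w : ℤ) x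
        + (1 / (n - p + w)) * GegZ ((n + 3) / 2) ((w : ℤ) - 2) x : ℝ) : ℂ)]

/-- The weight matrix `W_{p,n}` on `(-1,1)`. -/
def Wmat (p n : ℝ) (x : ℝ) : Matrix (Fin 2) (Fin 2) ℂ :=
  (((1 - x ^ 2) ^ (n / 2 - 1) : ℝ) : ℂ) •
    !![((p * x ^ 2 + n - p : ℝ) : ℂ), ((-(n * x) : ℝ) : ℂ);
       ((-(n * x) : ℝ) : ℂ), (((n - p) * x ^ 2 + p : ℝ) : ℂ)]

/-- Entrywise derivative of a matrix valued function. -/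
def mderiv (P : ℝ → Matrix (Fin 2) (Fin 2) ℂ) : ℝ → Matrix (Fin 2) (Fin 2) ℂ :=
  fun x => Matrix.of fun i j => deriv (fun t => P t i j) x

/-- The matrix valued inner product `⟨P,Q⟩ = ∫_{-1}^{1} P(x) W(x) Q(x)^* dx`. -/
def mint (p n : ℝ) (P Q : ℝ → Matrix (Fin 2) (Fin 2) ℂ) : Matrix (Fin 2) (Fin 2) ℂ :=
  Matrix.of fun i j => ∫ x in (-1 : ℝ)..1, (P x * Wmat p n x * (Q x)ᴴ) i j

/-- A matrix valued function is polynomial if each entry is given by a polynomial. -/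
def IsPolyMat (P : ℝ → Matrix (Fin 2) (Fin 2) ℂ) : Prop :=
  ∀ i j, ∃ q : Polynomial ℂ, ∀ x : ℝ, P x i j = q.eval (x : ℂ)


/-- `P_w` for integer index, with the convention `P_{-1} = 0`. -/
def PwZ (p n : ℝ) (w : ℤ) (x : ℝ) : Matrix (Fin 2) (Fin 2) ℂ :=
  if w < 0 then 0 else Pw p n w.toNat x

/-!
Write `λ = (n + 1) / 2`, so that the entries of `P_w` are combinations of `C_w^λ`, `C_{w-1}^{λ+1}`
and `C_{w-2}^{λ+1}`. Multiplying by `x` and applying the three-term recurrence of `C^λ` and of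
`C^{λ+1}`, and then the contiguous relation `(k + λ) C_k^λ = λ (C_k^{λ+1} - C_{k-2}^{λ+1})`, writes
both sides in the same Gegenbauer polynomials, whose coefficients agree as rational functions of
`n`, `p`, `w`. Exchanging `p` and `n - p` swaps the two rows of `P_w`, so two scalar identities
suffice, one for a diagonal and one for an off-diagonal entry.
-/

section Gegenbauer

variable (lam : ℝ)

lemma GegZ_of_neg {k : ℤ} (hk : k < 0) (x : ℝ) : GegZ lam k x = 0 := if_pos hk

lemma GegZ_natCast (m : ℕ) (x : ℝ) : GegZ lam m x = Geg lam m x := by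
  simp [GegZ]

@[simp] lemma GegZ_zero (x : ℝ) : GegZ lam 0 x = 1 := GegZ_natCast lam 0 x

@[simp] lemma GegZ_one (x : ℝ) : GegZ lam 1 x = 2 * lam * x := GegZ_natCast lam 1 x

lemma GegZ_three_term (k : ℤ) (x : ℝ) :
    2 * (k + lam) * x * GegZ lam k x
      = (k + 1) * GegZ lam (k + 1) x + (k + 2 * lam - 1) * GegZ lam (k - 1) x := by
  rcases lt_or_ge k (-1) with hk | hk
  · simp [GegZ_of_neg lam (by omega : k < 0), GegZ_of_neg lam (by omega : k + 1 < 0),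
      GegZ_of_neg lam (by omega : k - 1 < 0)]
  obtain ⟨m, rfl⟩ : ∃ m : ℕ, k = m - 1 := ⟨(k + 1).toNat, by omega⟩
  rcases m with _ | _ | m
  · simp [GegZ_of_neg lam (by omega : (-1 : ℤ) < 0), GegZ_of_neg lam (by omega : (-2 : ℤ) < 0)]
  · simp [GegZ_of_neg lam (by omega : (-1 : ℤ) < 0)]
  · have hm : ((m : ℝ) + 2) ≠ 0 := by positivity
    rw [show ((m + 2 : ℕ) : ℤ) - 1 = ((m + 1 : ℕ) : ℤ) by push_cast; ring,
      show ((m + 1 : ℕ) : ℤ) + 1 = ((m + 2 : ℕ) : ℤ) by push_cast; ring,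
      show ((m + 1 : ℕ) : ℤ) - 1 = ((m : ℕ) : ℤ) by push_cast; ring,
      GegZ_natCast, GegZ_natCast, GegZ_natCast, Geg]
    push_cast
    field_simp
    ring

variable {lam}

lemma GegZ_contiguous_natCast (hlam : 0 < lam) (x : ℝ) :
    ∀ m : ℕ, (m + lam) * GegZ lam m x
      = lam * (GegZ (lam + 1) m x - GegZ (lam + 1) ((m : ℤ) - 2) x)
  | 0 => by simp [GegZ_of_neg _ (by omega : (-2 : ℤ) < 0)]
  | 1 => by
    simp [GegZ_of_neg _ (by omega : (-1 : ℤ) < 0)]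
    ring
  | m + 2 => by
    have ih1 := GegZ_contiguous_natCast hlam x (m + 1)
    have ih0 := GegZ_contiguous_natCast hlam x m
    have hG := GegZ_three_term lam (m + 1 : ℕ) x
    have hH1 := GegZ_three_term (lam + 1) (m + 1 : ℕ) x
    have hH0 := GegZ_three_term (lam + 1) ((m : ℤ) - 1) x
    push_cast at ih1 ih0 hG hH1 hH0 ⊢
    simp only [show (m : ℤ) + 1 + 1 = m + 2 by ring, show (m : ℤ) + 1 - 1 = m by ring,
      show (m : ℤ) - 1 + 1 = m by ring, show (m : ℤ) - 1 - 1 = m - 2 by ring,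
      show (m : ℤ) + 1 - 2 = m - 1 by ring, show (m : ℤ) + 2 - 2 = m by ring] at *
    have h0 : (m : ℝ) + lam ≠ 0 := by positivity
    have h2 : (m : ℝ) + 2 ≠ 0 := by positivity
    -- the recurrence gives `(m + 2) C_{m+2}^λ` from `x C_{m+1}^λ` and `C_m^λ`; the induction
    -- hypotheses rewrite these in `C^{λ+1}`, and the recurrence of `C^{λ+1}` absorbs the factor `x`
    linear_combination (norm := skip)
      ((m + 2 + lam) / (m + 2) * (2 * x)) * ih1
      - ((m + 2 + lam) * (m + 2 * lam) / ((m + 2) * (m + lam))) * ih0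
      - ((m + 2 + lam) / (m + 2)) * hG + (lam / (m + 2)) * hH1
      - (lam * (m + 2 + lam) / ((m + 2) * (m + lam))) * hH0
    field_simp
    ring

lemma GegZ_contiguous (hlam : 0 < lam) (k : ℤ) (x : ℝ) :
    (k + lam) * GegZ lam k x = lam * (GegZ (lam + 1) k x - GegZ (lam + 1) (k - 2) x) := by
  rcases lt_or_ge k 0 with hk | hk
  · simp [GegZ_of_neg _ hk, GegZ_of_neg _ (by omega : k - 2 < 0)]
  · lift k to ℕ using hk
    exact GegZ_contiguous_natCast hlam x k

end Gegenbauer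

/-- The diagonal entries of `P_k`: `(P_k)₁₁ = PwDiag n p k` and `(P_k)₂₂ = PwDiag n (n - p) k`. -/
def PwDiag (n q : ℝ) (k : ℤ) (x : ℝ) : ℝ :=
  1 / (n + 1) * GegZ ((n + 1) / 2) k x + 1 / (q + k) * GegZ ((n + 3) / 2) (k - 2) x

/-- The off-diagonal entries of `P_k`: `(P_k)₁₂ = PwOff n p k` and `(P_k)₂₁ = PwOff n (n - p) k`. -/
def PwOff (n q : ℝ) (k : ℤ) (x : ℝ) : ℝ :=
  1 / (q + k) * GegZ ((n + 3) / 2) (k - 1) x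

lemma PwZ_eq_of_entries (p n : ℝ) (k : ℤ) (x : ℝ) :
    PwZ p n k x = !![(PwDiag n p k x : ℂ), PwOff n p k x;
      PwOff n (n - p) k x, PwDiag n (n - p) k x] := by
  rcases lt_or_ge k 0 with hk | hk
  · rw [PwZ, if_pos hk]
    ext i j
    fin_cases i <;> fin_cases j <;> simp [PwDiag, PwOff, GegZ_of_neg _ hk,
      GegZ_of_neg _ (by omega : k - 1 < 0), GegZ_of_neg _ (by omega : k - 2 < 0)]
  · lift k to ℕ using hk
    simp [PwZ, Pw, PwDiag, PwOff]

lemma Pw_eq_PwZ (p n : ℝ) (w : ℕ) (x : ℝ) : Pw p n w x = PwZ p n w x := by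
  simp [PwZ]

lemma PwDiag_three_term {n q r : ℝ} (hq : 0 < q) (hr : 0 < r) (hn : n = q + r) (w : ℕ) (x : ℝ) :
    x * PwDiag n q w x
      = (n + w) * (q + w - 1) * (r + w + 1) / ((q + w) * (r + w) * (2 * w + n + 1))
          * PwDiag n q ((w : ℤ) - 1) x
        + -q / ((q + w) * (q + w + 1)) * PwOff n r w x
        + (w + 1) / (2 * w + n + 1) * PwDiag n q ((w : ℤ) + 1) x := by
  subst hn
  rcases Nat.eq_zero_or_pos w with rfl | hw
  · have : q + r + 1 ≠ 0 := by positivity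
    simp [PwDiag, PwOff, GegZ_of_neg _ (by omega : (-1 : ℤ) < 0),
      GegZ_of_neg _ (by omega : (-2 : ℤ) < 0), GegZ_of_neg _ (by omega : (-3 : ℤ) < 0)]
    field_simp
  have hw : (1 : ℝ) ≤ w := by exact_mod_cast hw
  have hlam : 0 < (q + r + 1) / 2 := by positivity
  have hG := GegZ_three_term ((q + r + 1) / 2) w x
  have hH := GegZ_three_term ((q + r + 3) / 2) ((w : ℤ) - 2) x
  have hC := GegZ_contiguous hlam ((w : ℤ) - 1) x
  rw [show (q + r + 1) / 2 + 1 = (q + r + 3) / 2 by ring] at hC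
  simp only [PwDiag, PwOff]
  push_cast at hG hH hC ⊢
  rw [show (w : ℤ) - 2 + 1 = w - 1 by ring, show (w : ℤ) - 2 - 1 = w - 3 by ring] at hH
  rw [show (w : ℤ) - 1 - 2 = w - 3 by ring] at hC ⊢
  rw [show (w : ℤ) + 1 - 2 = w - 1 by ring]
  have : q + r + 1 ≠ 0 := by positivity
  have : q + w ≠ 0 := by positivity
  have : r + w ≠ 0 := by positivity
  have : q + (w + 1) ≠ 0 := by positivity
  have : q + (w - 1) ≠ 0 := by linarith
  have : 2 * w + (q + r) + 1 ≠ 0 := by positivity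
  have : 2 * w + (q + r) - 1 ≠ 0 := by linarith
  -- after eliminating `x C_w^λ` and `x C_{w-2}^{λ+1}`, the coefficient of `C_{w-1}^λ` left over is
  -- `(w + n) (r - q + 1) / ((n + 1) (2w + n + 1) (q + w) (r + w))`, removed by the contiguous relation
  linear_combination (norm := skip)
    (1 / ((q + r + 1) * (2 * w + (q + r) + 1))) * hG + (1 / ((q + w) * (2 * w + (q + r) - 1))) * hH
    + (2 * (w + (q + r)) * (r - q + 1) / ((q + r + 1) * (2 * w + (q + r) + 1) * (q + w) * (r + w)
      * (2 * w + (q + r) - 1))) * hC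
  field_simp
  ring

lemma PwOff_three_term {n q r : ℝ} (hq : 0 < q) (hr : 0 < r) (hn : n = q + r) (w : ℕ) (x : ℝ) :
    x * PwOff n q w x
      = (n + w) * (q + w - 1) * (r + w + 1) / ((q + w) * (r + w) * (2 * w + n + 1))
          * PwOff n q ((w : ℤ) - 1) x
        + -q / ((q + w) * (q + w + 1)) * PwDiag n r w x
        + (w + 1) / (2 * w + n + 1) * PwOff n q ((w : ℤ) + 1) x := by
  subst hn
  rcases Nat.eq_zero_or_pos w with rfl | hw
  · have : q + r + 1 ≠ 0 := by positivity
    have : q + 1 ≠ 0 := by positivity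
    simp [PwDiag, PwOff, GegZ_of_neg _ (by omega : (-1 : ℤ) < 0),
      GegZ_of_neg _ (by omega : (-2 : ℤ) < 0)]
    field_simp
    ring
  have hw : (1 : ℝ) ≤ w := by exact_mod_cast hw
  have hlam : 0 < (q + r + 1) / 2 := by positivity
  have hH := GegZ_three_term ((q + r + 3) / 2) ((w : ℤ) - 1) x
  have hC := GegZ_contiguous hlam w x
  rw [show (q + r + 1) / 2 + 1 = (q + r + 3) / 2 by ring] at hC
  simp only [PwDiag, PwOff]
  push_cast at hH hC ⊢
  simp only [show (w : ℤ) - 1 + 1 = w by ring, show (w : ℤ) - 1 - 1 = w - 2 by ring,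
    show (w : ℤ) + 1 - 1 = w by ring] at hH hC ⊢
  have : q + r + 1 ≠ 0 := by positivity
  have : q + w ≠ 0 := by positivity
  have : r + w ≠ 0 := by positivity
  have : q + w + 1 ≠ 0 := by positivity
  have : q + (w - 1) ≠ 0 := by linarith
  have : 2 * w + (q + r) + 1 ≠ 0 := by positivity
  linear_combination (norm := skip)
    (1 / ((q + w) * (2 * w + (q + r) + 1))) * hH
    + (2 * q / ((q + w) * (q + w + 1) * (q + r + 1) * (2 * w + (q + r) + 1))) * hC
  field_simp
  ring

/-- the three-term recursion relation
`x P_w(x) = A_w P_{w-1}(x) + B_w P_w(x) + C_w P_{w+1}(x)`. -/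
theorem statement8 (p n : ℝ) (hp : 0 < p) (hpn : p < n) (w : ℕ) (x : ℝ) :
    (x : ℂ) • Pw p n w x
      = !![(((n + w) * (p + w - 1) * (n - p + w + 1) /
              ((p + w) * (n - p + w) * (2 * w + n + 1)) : ℝ) : ℂ), 0;
           0, (((n + w) * (p + w + 1) * (n - p + w - 1) /
              ((p + w) * (n - p + w) * (2 * w + n + 1)) : ℝ) : ℂ)]
          * PwZ p n ((w : ℤ) - 1) x
        + !![0, ((-p / ((p + w) * (p + w + 1)) : ℝ) : ℂ);
             ((-(n - p) / ((n - p + w) * (n - p + w + 1)) : ℝ) : ℂ), 0]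
          * Pw p n w x
        + (((w + 1) / (2 * w + n + 1) : ℝ) : ℂ) • Pw p n (w + 1) x := by
  have hnp : 0 < n - p := sub_pos.mpr hpn
  have hn : n = p + (n - p) := by ring
  have hn' : n = (n - p) + p := by ring
  have hA : (n + w) * (p + w + 1) * (n - p + w - 1) / ((p + w) * (n - p + w) * (2 * w + n + 1))
      = (n + w) * (n - p + w - 1) * (p + w + 1) / ((n - p + w) * (p + w) * (2 * w + n + 1)) := by
    ring
  rw [hA]
  simp only [Pw_eq_PwZ, PwZ_eq_of_entries, Nat.cast_succ]
  ext i j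
  fin_cases i <;> fin_cases j <;> simp [-neg_sub]
  exacts [mod_cast PwDiag_three_term hp hnp hn w x, mod_cast PwOff_three_term hp hnp hn w x,
    mod_cast PwOff_three_term hnp hp hn' w x, mod_cast PwDiag_three_term hnp hp hn' w x]

end
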